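/- c₀^λ(F̂), equipped with the norm ‖x‖ = sup_n |F̄_n(x)|, is a Banach space (the norm is well-defined and complete). -/

import Mathlib

open Filter Finset

noncomputable def fibR : ℕ → ℝ
  | 0 => 1
  | 1 => 1
  | (n + 2) => fibR (n + 1) + fibR n

noncomputable def Fhat (x : ℕ → ℝ) (n : ℕ) : ℝ :=
  fibR n / fibR (n + 1) * x n - fibR (n + 1) / fibR n * (if n = 0 then 0 else x (n - 1))

noncomputable def Fbar (Λ : ℕ → ℝ) (x : ℕ → ℝ) (n : ℕ) : ℝ :=
  (1 / Λ n) * ∑ k ∈ Finset.range (n + 1),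
    (Λ k - if k = 0 then 0 else Λ (k - 1)) *
      (fibR k / fibR (k + 1) * x k -
        fibR (k + 1) / fibR k * (if k = 0 then 0 else x (k - 1)))

/-! `Fbar Λ` is the weighted mean `weightedMean Λ` composed with the difference operator `Fhat`.
Both are additive and surjective (lower-triangular systems with nonzero diagonal), so `Fbar Λ`
maps `c₀^λ(F̂)` with the norm `sup_n |F̄_n x|` isometrically onto `c₀`, which is complete. -/

lemma fibR_pos : ∀ n, 0 < fibR n
  | 0 => by simp [fibR]
  | 1 => by simp [fibR]
  | (n + 2) => by
      have h1 := fibR_pos (n + 1)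
      have h2 := fibR_pos n
      simp only [fibR]
      linarith

lemma Fhat_sub (a b : ℕ → ℝ) (n : ℕ) :
    Fhat (fun i => a i - b i) n = Fhat a n - Fhat b n := by
  unfold Fhat
  split_ifs <;> ring

/-- Solves `Fhat x = t` by forward substitution. -/
noncomputable def fhatPreimage (t : ℕ → ℝ) : ℕ → ℝ
  | 0 => t 0
  | (n + 1) => (t (n + 1) + fibR (n + 2) / fibR (n + 1) * fhatPreimage t n) *
      (fibR (n + 2) / fibR (n + 1))

lemma Fhat_fhatPreimage (t : ℕ → ℝ) : ∀ n, Fhat (fhatPreimage t) n = t n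
  | 0 => by simp [Fhat, fhatPreimage, fibR]
  | (n + 1) => by
      have h1 := (fibR_pos (n + 1)).ne'
      have h2 := (fibR_pos (n + 2)).ne'
      simp only [Fhat, fhatPreimage, Nat.add_sub_cancel, if_neg (Nat.succ_ne_zero n)]
      field_simp
      ring

lemma Fhat_surjective : Function.Surjective Fhat :=
  fun t => ⟨fhatPreimage t, funext (Fhat_fhatPreimage t)⟩

noncomputable def weightedMean (Λ t : ℕ → ℝ) (n : ℕ) : ℝ :=
  (1 / Λ n) * ∑ k ∈ range (n + 1), (Λ k - if k = 0 then 0 else Λ (k - 1)) * t k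

lemma Fbar_eq_weightedMean_Fhat (Λ x : ℕ → ℝ) : Fbar Λ x = weightedMean Λ (Fhat x) := rfl

lemma weightedMean_sub (Λ s t : ℕ → ℝ) (n : ℕ) :
    weightedMean Λ (fun i => s i - t i) n = weightedMean Λ s n - weightedMean Λ t n := by
  simp only [weightedMean, mul_sub, sum_sub_distrib]

lemma Fbar_sub (Λ a b : ℕ → ℝ) (n : ℕ) :
    Fbar Λ (fun i => a i - b i) n = Fbar Λ a n - Fbar Λ b n := by
  simp only [Fbar_eq_weightedMean_Fhat, ← weightedMean_sub]
  exact congrArg (weightedMean Λ · n) (funext (Fhat_sub a b))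

lemma sum_range_sub_prev (g : ℕ → ℝ) (n : ℕ) :
    ∑ k ∈ range (n + 1), (g k - if k = 0 then 0 else g (k - 1)) = g n := by
  induction n with
  | zero => simp
  | succ n ih =>
      rw [sum_range_succ, ih]
      simp

lemma weightedMean_surjective {Λ : ℕ → ℝ} (hinj : Function.Injective Λ) (hne : ∀ n, Λ n ≠ 0) :
    Function.Surjective (weightedMean Λ) := by
  intro y
  have hweight : ∀ k, (Λ k - if k = 0 then 0 else Λ (k - 1)) ≠ 0 := by
    rintro (_ | k)
    · simpa using hne 0
    · simpa [sub_eq_zero] using hinj.ne (Nat.succ_ne_self k)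
  refine ⟨fun k => (Λ k * y k - if k = 0 then 0 else Λ (k - 1) * y (k - 1)) /
    (Λ k - if k = 0 then 0 else Λ (k - 1)), funext fun n => ?_⟩
  simp only [weightedMean, mul_div_cancel₀ _ (hweight _)]
  rw [sum_range_sub_prev (fun k => Λ k * y k), one_div, inv_mul_cancel_left₀ (hne n)]

lemma Fbar_surjective {Λ : ℕ → ℝ} (hinj : Function.Injective Λ) (hne : ∀ n, Λ n ≠ 0) :
    Function.Surjective (Fbar Λ) :=
  (weightedMean_surjective hinj hne).comp Fhat_surjective

theorem exists_tendsto_zero_of_uniformCauchy {α E : Type*} [NormedAddCommGroup E]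
    [CompleteSpace E] {l : Filter α} (v : ℕ → α → E) (hv : ∀ m, Tendsto (v m) l (nhds 0))
    (hcauchy : ∀ ε : ℝ, 0 < ε → ∃ N, ∀ p q, N ≤ p → N ≤ q → ∀ n, ‖v p n - v q n‖ ≤ ε) :
    ∃ y : α → E, Tendsto y l (nhds 0) ∧
      ∀ ε : ℝ, 0 < ε → ∃ N, ∀ p, N ≤ p → ∀ n, ‖v p n - y n‖ ≤ ε := by
  have hunif : UniformCauchySeqOn v atTop Set.univ := by
    refine Metric.uniformCauchySeqOn_iff.2 fun ε hε => ?_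
    obtain ⟨N, hN⟩ := hcauchy (ε / 2) (half_pos hε)
    exact ⟨N, fun p hp q hq n _ => (dist_eq_norm _ _).trans_lt ((hN p q hp hq n).trans_lt
      (half_lt_self hε))⟩
  choose y hy using fun n => cauchySeq_tendsto_of_complete (hunif.cauchySeq (Set.mem_univ n))
  have hlim : TendstoUniformly v y atTop :=
    tendstoUniformlyOn_univ.1 (hunif.tendstoUniformlyOn_of_tendsto fun n _ => hy n)
  refine ⟨y, hlim.tendsto_of_eventually_tendsto (Eventually.of_forall hv) tendsto_const_nhds,
    fun ε hε => ?_⟩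
  obtain ⟨N, hN⟩ := eventually_atTop.1 (Metric.tendstoUniformly_iff.1 hlim ε hε)
  exact ⟨N, fun p hp n => by simpa [dist_eq_norm'] using (hN p hp n).le⟩

theorem c0lambdaF_banach_general (Λ : ℕ → ℝ) (hmono : StrictMono Λ) (hpos : ∀ k, 0 < Λ k) :
    (∀ x : ℕ → ℝ, Tendsto (Fbar Λ x) atTop (nhds 0) → ∃ M : ℝ, ∀ n, |Fbar Λ x n| ≤ M) ∧
    (∀ u : ℕ → (ℕ → ℝ), (∀ m, Tendsto (Fbar Λ (u m)) atTop (nhds 0)) →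
      (∀ ε : ℝ, 0 < ε → ∃ N, ∀ p q, N ≤ p → N ≤ q →
        ∀ n, |Fbar Λ (fun i => u p i - u q i) n| ≤ ε) →
      ∃ x : ℕ → ℝ, Tendsto (Fbar Λ x) atTop (nhds 0) ∧
        ∀ ε : ℝ, 0 < ε → ∃ N, ∀ p, N ≤ p →
          ∀ n, |Fbar Λ (fun i => u p i - x i) n| ≤ ε) := by
  refine ⟨fun x hx => ?_, fun u hu hcauchy => ?_⟩
  · obtain ⟨M, hM⟩ := isBounded_iff_forall_norm_le.1 (Metric.isBounded_range_of_tendsto _ hx)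
    exact ⟨M, fun n => hM _ ⟨n, rfl⟩⟩
  · obtain ⟨y, hy0, hy⟩ := exists_tendsto_zero_of_uniformCauchy (fun m => Fbar Λ (u m)) hu
      (by simpa only [Fbar_sub, Real.norm_eq_abs] using hcauchy)
    obtain ⟨x, rfl⟩ := Fbar_surjective hmono.injective (fun n => (hpos n).ne') y
    exact ⟨x, hy0, by simpa only [Fbar_sub, Real.norm_eq_abs] using hy⟩

theorem c0lambdaF_banach (Λ : ℕ → ℝ) (hmono : StrictMono Λ) (hpos : ∀ k, 0 < Λ k)
    (hlim : Tendsto Λ atTop atTop) :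
    (∀ x : ℕ → ℝ, Tendsto (Fbar Λ x) atTop (nhds 0) → ∃ M : ℝ, ∀ n, |Fbar Λ x n| ≤ M) ∧
    (∀ u : ℕ → (ℕ → ℝ), (∀ m, Tendsto (Fbar Λ (u m)) atTop (nhds 0)) →
      (∀ ε : ℝ, 0 < ε → ∃ N, ∀ p q, N ≤ p → N ≤ q →
        ∀ n, |Fbar Λ (fun i => u p i - u q i) n| ≤ ε) →
      ∃ x : ℕ → ℝ, Tendsto (Fbar Λ x) atTop (nhds 0) ∧
        ∀ ε : ℝ, 0 < ε → ∃ N, ∀ p, N ≤ p →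
          ∀ n, |Fbar Λ (fun i => u p i - x i) n| ≤ ε) :=
  c0lambdaF_banach_general Λ hmono hpos
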